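/- Let G be a common function of X and (Y,Z), where (X,Y) is independent of Z. Then H(G|Y)=0, i.e., G is already a common function of X and Y. -/

import Mathlib

open Real Finset

/-- Probability that random variable `X` takes value `a`, under the distribution `p` on `Ω`. -/
noncomputable def pr {Ω α : Type*} [Fintype Ω] [DecidableEq α]
    (p : Ω → ℝ) (X : Ω → α) (a : α) : ℝ :=
  ∑ ω ∈ Finset.univ.filter (fun ω => X ω = a), p ω

/-- Shannon entropy (natural log) of a random variable `X` on the finite space `Ω`. -/
noncomputable def ent {Ω α : Type*} [Fintype Ω] [DecidableEq α]
    (p : Ω → ℝ) (X : Ω → α) : ℝ :=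
  ∑ a ∈ Finset.univ.image X, Real.negMulLog (pr p X a)

/-- Conditional entropy H(X | Y) = H(X,Y) - H(Y). -/
noncomputable def cent {Ω α β : Type*} [Fintype Ω] [DecidableEq α] [DecidableEq β]
    (p : Ω → ℝ) (X : Ω → α) (Y : Ω → β) : ℝ :=
  ent p (fun ω => (X ω, Y ω)) - ent p Y

/-- `p` is a probability distribution on `Ω`. -/
def IsProb {Ω : Type*} [Fintype Ω] (p : Ω → ℝ) : Prop :=
  (∀ ω, 0 ≤ p ω) ∧ ∑ ω, p ω = 1

/-- Independence of two random variables under `p`. -/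
def IndepRV {Ω α β : Type*} [Fintype Ω] [DecidableEq α] [DecidableEq β]
    (p : Ω → ℝ) (X : Ω → α) (Y : Ω → β) : Prop :=
  ∀ a b, pr p (fun ω => (X ω, Y ω)) (a, b) = pr p X a * pr p Y b

/-- `G` is a common function of `U` and `V`: H(G|U) = H(G|V) = 0. -/
def IsCF {Ω α β γ : Type*} [Fintype Ω] [DecidableEq α] [DecidableEq β] [DecidableEq γ]
    (p : Ω → ℝ) (U : Ω → α) (V : Ω → β) (G : Ω → γ) : Prop :=
  cent p G U = 0 ∧ cent p G V = 0

/-- `G` is a maximal common function (Gács–Körner) of `U` and `V`: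
a common function of maximal entropy among all common functions. -/
def IsMCF {Ω α β γ : Type*} [Fintype Ω] [DecidableEq α] [DecidableEq β] [DecidableEq γ]
    (p : Ω → ℝ) (U : Ω → α) (V : Ω → β) (G : Ω → γ) : Prop :=
  IsCF p U V G ∧ ∀ G' : Ω → ℕ, IsCF p U V G' → ent p G' ≤ ent p G

/-!
Vanishing conditional entropy `H(G|W) = 0` means exactly that `G` is a function of `W` on the
support of `p`: this is the equality case of the subadditivity of `x ↦ -x log x`, applied to the
joint probabilities of `(G, W)` in each fibre of `W`. Now let `ω, ω'` lie in the support with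
`Y ω = Y ω'`. Since `(X, Y)` is independent of `Z`, the value `((X ω, Y ω), Z ω')` has positive
probability, so it is attained at some `ω''` in the support. Then `G ω = G ω''` because `G` is a
function of `X`, and `G ω'' = G ω'` because `G` is a function of `(Y, Z)`.
-/

namespace Real

lemma mul_neg_log_le_negMulLog {x S : ℝ} (hx : 0 ≤ x) (hxS : x ≤ S) :
    x * -log S ≤ negMulLog x := by
  rcases hx.eq_or_lt with rfl | hx
  · simp
  · have := log_le_log hx hxS
    rw [negMulLog]
    nlinarith

lemma mul_neg_log_lt_negMulLog {x S : ℝ} (hx : 0 < x) (hxS : x < S) :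
    x * -log S < negMulLog x := by
  have := log_lt_log hx hxS
  rw [negMulLog]
  nlinarith

lemma negMulLog_sum_eq_sum_mul_neg_log {ι : Type*} (s : Finset ι) (f : ι → ℝ) :
    negMulLog (∑ i ∈ s, f i) = ∑ i ∈ s, f i * -log (∑ j ∈ s, f j) := by
  rw [← Finset.sum_mul, negMulLog]
  ring

lemma negMulLog_sum_le_sum {ι : Type*} (s : Finset ι) {f : ι → ℝ} (hf : ∀ i ∈ s, 0 ≤ f i) :
    negMulLog (∑ i ∈ s, f i) ≤ ∑ i ∈ s, negMulLog (f i) := by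
  rw [negMulLog_sum_eq_sum_mul_neg_log]
  exact Finset.sum_le_sum fun i hi => mul_neg_log_le_negMulLog (hf i hi) (single_le_sum hf hi)

lemma negMulLog_sum_lt_sum {ι : Type*} (s : Finset ι) {f : ι → ℝ} (hf : ∀ i ∈ s, 0 ≤ f i)
    {i j : ι} (hi : i ∈ s) (hj : j ∈ s) (hij : i ≠ j) (hfi : 0 < f i) (hfj : 0 < f j) :
    negMulLog (∑ k ∈ s, f k) < ∑ k ∈ s, negMulLog (f k) := by
  have hfi_lt : f i < ∑ k ∈ s, f k := by
    classical
    have hfj_le : f j ≤ ∑ k ∈ s.erase i, f k :=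
      single_le_sum (fun k hk => hf k (mem_of_mem_erase hk)) (mem_erase.2 ⟨hij.symm, hj⟩)
    linarith [add_sum_erase s f hi]
  rw [negMulLog_sum_eq_sum_mul_neg_log]
  exact sum_lt_sum (fun k hk => mul_neg_log_le_negMulLog (hf k hk) (single_le_sum hf hk))
    ⟨i, hi, mul_neg_log_lt_negMulLog hfi hfi_lt⟩

lemma negMulLog_sum_eq_sum_iff {ι : Type*} (s : Finset ι) {f : ι → ℝ}
    (hf : ∀ i ∈ s, 0 ≤ f i) :
    negMulLog (∑ i ∈ s, f i) = ∑ i ∈ s, negMulLog (f i) ↔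
      ∀ i ∈ s, ∀ j ∈ s, 0 < f i → 0 < f j → i = j := by
  refine ⟨fun heq i hi j hj hfi hfj => ?_, fun hunique => ?_⟩
  · by_contra hij
    exact (negMulLog_sum_lt_sum s hf hi hj hij hfi hfj).ne heq
  by_cases hpos : ∃ i ∈ s, 0 < f i
  · obtain ⟨i, hi, hfi⟩ := hpos
    have hzero : ∀ j ∈ s, j ≠ i → f j = 0 := fun j hj hji =>
      ((hf j hj).eq_or_lt.resolve_right fun hfj => hji (hunique j hj i hi hfj hfi)).symm
    rw [sum_eq_single_of_mem i hi hzero,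
      sum_eq_single_of_mem i hi fun j hj hji => by rw [hzero j hj hji, negMulLog_zero]]
  · push Not at hpos
    have hzero : ∀ i ∈ s, f i = 0 := fun i hi => le_antisymm (hpos i hi) (hf i hi)
    rw [sum_eq_zero hzero, sum_eq_zero fun i hi => by rw [hzero i hi, negMulLog_zero],
      negMulLog_zero]

end Real

def DeterminedOnSupport {Ω α δ : Type*} (p : Ω → ℝ) (G : Ω → δ) (W : Ω → α) : Prop :=
  ∀ ⦃ω ω'⦄, 0 < p ω → 0 < p ω' → W ω = W ω' → G ω = G ω'

section Entropy

variable {Ω α β δ : Type*} [Fintype Ω] [DecidableEq α] [DecidableEq β] [DecidableEq δ]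
  {p : Ω → ℝ}

lemma pr_nonneg (hp : ∀ ω, 0 ≤ p ω) (X : Ω → α) (a : α) : 0 ≤ pr p X a :=
  sum_nonneg fun ω _ => hp ω

lemma pr_pos_iff (hp : ∀ ω, 0 ≤ p ω) (X : Ω → α) (a : α) :
    0 < pr p X a ↔ ∃ ω, 0 < p ω ∧ X ω = a := by
  rw [pr, sum_pos_iff_of_nonneg fun ω _ => hp ω]
  simp only [mem_filter, mem_univ, true_and, and_comm]

lemma pr_zero_of_notMem_image (X : Ω → α) {a : α} (ha : a ∉ univ.image X) : pr p X a = 0 :=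
  sum_eq_zero fun ω hω => absurd ((mem_filter.1 hω).2 ▸ mem_image_of_mem X (mem_univ ω)) ha

lemma sum_pr_prodMk (G : Ω → δ) (W : Ω → α) (w : α) :
    ∑ g ∈ univ.image G, pr p (fun ω => (G ω, W ω)) (g, w) = pr p W w := by
  rw [pr, ← sum_fiberwise_of_maps_to (g := G) fun ω _ => mem_image_of_mem G (mem_univ ω)]
  refine sum_congr rfl fun g _ => sum_congr ?_ fun _ _ => rfl
  ext ω
  simp [Prod.ext_iff, and_comm]

lemma ent_eq_sum_of_image_subset (X : Ω → α) {s : Finset α} (hs : univ.image X ⊆ s) :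
    ent p X = ∑ a ∈ s, negMulLog (pr p X a) :=
  sum_subset hs fun a _ ha => by rw [pr_zero_of_notMem_image X ha, negMulLog_zero]

lemma cent_eq_sum (G : Ω → δ) (W : Ω → α) :
    cent p G W = ∑ w ∈ univ.image W,
      (∑ g ∈ univ.image G, negMulLog (pr p (fun ω => (G ω, W ω)) (g, w))
        - negMulLog (∑ g ∈ univ.image G, pr p (fun ω => (G ω, W ω)) (g, w))) := by
  have hsub : univ.image (fun ω => (G ω, W ω)) ⊆ univ.image G ×ˢ univ.image W := by
    rintro _ hx
    obtain ⟨ω, -, rfl⟩ := mem_image.1 hx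
    exact mem_product.2 ⟨mem_image_of_mem G (mem_univ ω), mem_image_of_mem W (mem_univ ω)⟩
  simp only [sum_pr_prodMk]
  rw [cent, ent_eq_sum_of_image_subset _ hsub, sum_product_right, ent, ← sum_sub_distrib]

lemma cent_eq_zero_iff (hp : ∀ ω, 0 ≤ p ω) (G : Ω → δ) (W : Ω → α) :
    cent p G W = 0 ↔ DeterminedOnSupport p G W := by
  have hjoint_nonneg : ∀ w, ∀ g ∈ univ.image G, 0 ≤ pr p (fun ω => (G ω, W ω)) (g, w) :=
    fun _ _ _ => pr_nonneg hp _ _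
  rw [cent_eq_sum, sum_eq_zero_iff_of_nonneg fun w _ =>
    sub_nonneg.2 (negMulLog_sum_le_sum _ (hjoint_nonneg w))]
  simp only [sub_eq_zero, eq_comm (a := ∑ g ∈ univ.image G, _),
    negMulLog_sum_eq_sum_iff _ (hjoint_nonneg _), pr_pos_iff hp]
  constructor
  · intro h ω ω' hω hω' hW
    exact h (W ω) (mem_image_of_mem W (mem_univ ω)) (G ω) (mem_image_of_mem G (mem_univ ω))
      (G ω') (mem_image_of_mem G (mem_univ ω')) ⟨ω, hω, rfl⟩ ⟨ω', hω', by rw [hW]⟩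
  · rintro h w - g - g' - ⟨ω, hω, hωgw⟩ ⟨ω', hω', hω'gw⟩
    simp only [Prod.mk.injEq] at hωgw hω'gw
    rw [← hωgw.1, ← hω'gw.1]
    exact h hω hω' (hωgw.2.trans hω'gw.2.symm)

lemma IndepRV.exists_pos_eq_and_eq {U : Ω → α} {Z : Ω → β} (hp : ∀ ω, 0 ≤ p ω)
    (h : IndepRV p U Z) {ω ω' : Ω} (hω : 0 < p ω) (hω' : 0 < p ω') :
    ∃ ω'', 0 < p ω'' ∧ U ω'' = U ω ∧ Z ω'' = Z ω' := by
  have hpos : 0 < pr p (fun ω => (U ω, Z ω)) (U ω, Z ω') := by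
    rw [h]
    exact mul_pos ((pr_pos_iff hp U _).2 ⟨ω, hω, rfl⟩) ((pr_pos_iff hp Z _).2 ⟨ω', hω', rfl⟩)
  obtain ⟨ω'', hω'', hUZ⟩ := (pr_pos_iff hp _ _).1 hpos
  exact ⟨ω'', hω'', Prod.mk.inj hUZ⟩

end Entropy

/-- If (X,Y) is independent of Z and `G` is a common function of X and
(Y,Z), i.e. H(G|X) = 0 and H(G|Y,Z) = 0, then H(G|Y) = 0, so `G` is already a common
function of X and Y. -/
theorem cf_of_pair_indep {Ω α β γ δ : Type*} [Fintype Ω]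
    [DecidableEq α] [DecidableEq β] [DecidableEq γ] [DecidableEq δ]
    (p : Ω → ℝ) (hp : IsProb p)
    (X : Ω → α) (Y : Ω → β) (Z : Ω → γ)
    (hind : IndepRV p (fun ω => (X ω, Y ω)) Z)
    (G : Ω → δ)
    (hGX : cent p G X = 0)
    (hGYZ : cent p G (fun ω => (Y ω, Z ω)) = 0) :
    cent p G Y = 0 := by
  rw [cent_eq_zero_iff hp.1] at hGX hGYZ ⊢
  intro ω ω' hω hω' hY
  obtain ⟨ω'', hω'', hXY, hZ⟩ := hind.exists_pos_eq_and_eq hp.1 hω hω'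
  simp only [Prod.mk.injEq] at hXY
  calc G ω = G ω'' := hGX hω hω'' hXY.1.symm
    _ = G ω' := hGYZ hω'' hω' (Prod.ext (hXY.2.trans hY) hZ)
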